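/- arXiv:2108.03754 — 2 statements merged into one kernel-verified Lean document; each statement's English description precedes it below -/
import Mathlib

section
/- Let m ∈ (ℤ/n)* satisfy m² = 1. Then one can write n = N₁ · N₂ with N₁, N₂ coprime (possibly equal to 1) such that, under the Chinese remainder isomorphism ℤ/n ≅ ℤ/N₁ × ℤ/N₂, m corresponds to one of: (1, -1); or (1, -1 + N₂/2) with 8 ∣ N₂; or (-1, 1 + N₂/2) with 8 ∣ N₂. -/
lemma odd_split (q : ℕ) (hq : Odd q) (a : ℤ) (h : (q:ℤ) ∣ a^2 - 1) :
    ∃ q₁ q₂ : ℕ, q = q₁ * q₂ ∧ Nat.Coprime q₁ q₂ ∧ (q₁:ℤ) ∣ a - 1 ∧ (q₂:ℤ) ∣ a + 1 := by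
  induction q using Nat.strong_induction_on with
  | _ q ih =>
  rcases eq_or_lt_of_le (Nat.one_le_iff_ne_zero.mpr hq.pos.ne') with h1 | h1
  · exact ⟨1, 1, by omega, by norm_num, by simp, by simp⟩
  have hq0 : q ≠ 0 := hq.pos.ne'
  set p := q.minFac with hp
  have hpp : p.Prime := Nat.minFac_prime (by omega)
  have hpodd : p ≠ 2 := by
    rintro h2
    have h3 : 2 ∣ q := h2 ▸ Nat.minFac_dvd q
    have := Nat.odd_iff.mp hq
    omega
  set e := q.factorization p with he
  set r := q / p ^ e with hr
  have hqer : q = p ^ e * r := (Nat.ordProj_mul_ordCompl_eq_self q p).symm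
  have hpr : ¬ p ∣ r := Nat.not_dvd_ordCompl hpp hq0
  have he1 : 1 ≤ e := hpp.factorization_pos_of_dvd hq0 (Nat.minFac_dvd q)
  have hpe1 : 1 < p ^ e := Nat.one_lt_pow (by omega) hpp.one_lt
  have hpedvd : p ^ e ∣ q := ⟨r, hqer⟩
  have hrdvdq : r ∣ q := Dvd.intro_left _ hqer.symm
  have hr0 : 0 < r := Nat.pos_of_dvd_of_pos hrdvdq hq.pos
  have hrlt : r < q := by nlinarith
  have hrodd : Odd r := by
    rcases Nat.even_or_odd r with h2 | h2
    · have : 2 ∣ q := dvd_trans h2.two_dvd hrdvdq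
      have := Nat.odd_iff.mp hq; omega
    · exact h2
  have hrdvd : (r:ℤ) ∣ a^2 - 1 := dvd_trans (Int.natCast_dvd_natCast.mpr hrdvdq) h
  obtain ⟨r₁, r₂, hrr, hcop, hd1, hd2⟩ := ih r hrlt hrodd hrdvd
  have hfac : (p:ℤ)^e ∣ (a-1) * (a+1) := by
    have h' : (a-1)*(a+1) = a^2-1 := by ring
    rw [h']
    exact dvd_trans (by exact_mod_cast Int.natCast_dvd_natCast.mpr hpedvd) h
  have hprime : Prime (p:ℤ) := Nat.prime_iff_prime_int.mp hpp
  have hkey : (p:ℤ)^e ∣ a - 1 ∨ (p:ℤ)^e ∣ a + 1 := by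
    by_cases h2 : (p:ℤ) ∣ a - 1
    · left
      have hn : ¬ (p:ℤ) ∣ a + 1 := by
        rintro h3
        have h4 : (p:ℤ) ∣ 2 := by have := dvd_sub h3 h2; simpa using this
        have h5 : p ∣ 2 := by exact_mod_cast h4
        exact hpodd ((Nat.prime_dvd_prime_iff_eq hpp Nat.prime_two).mp h5)
      have hcp : IsCoprime ((p:ℤ)^e) (a+1) :=
        IsCoprime.pow_left (hprime.coprime_iff_not_dvd.mpr hn)
      exact hcp.dvd_of_dvd_mul_right hfac
    · right
      have hcp : IsCoprime ((p:ℤ)^e) (a-1) :=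
        IsCoprime.pow_left (hprime.coprime_iff_not_dvd.mpr h2)
      exact hcp.dvd_of_dvd_mul_right (by rwa [mul_comm] at hfac)
  have hcpe : ∀ s : ℕ, ¬ p ∣ s → Nat.Coprime (p^e) s := fun s hs =>
    Nat.Coprime.pow_left e (hpp.coprime_iff_not_dvd.mpr hs)
  have hpr₁ : ¬ p ∣ r₁ := fun hd => hpr (hrr ▸ hd.mul_right r₂)
  have hpr₂ : ¬ p ∣ r₂ := fun hd => hpr (hrr ▸ hd.mul_left r₁)
  rcases hkey with h2 | h2
  · refine ⟨p^e * r₁, r₂, by rw [hqer, hrr, mul_assoc], ?_, ?_, hd2⟩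
    · exact Nat.Coprime.mul (hcpe r₂ hpr₂) hcop
    · push_cast
      refine IsCoprime.mul_dvd ?_ h2 hd1
      exact_mod_cast Nat.isCoprime_iff_coprime.mpr (hcpe r₁ hpr₁)
  · refine ⟨r₁, p^e * r₂, by rw [hqer, hrr]; ring, ?_, hd1, ?_⟩
    · exact Nat.Coprime.mul_right (hcpe r₁ hpr₁).symm hcop
    · push_cast
      refine IsCoprime.mul_dvd ?_ h2 hd2
      exact_mod_cast Nat.isCoprime_iff_coprime.mpr (hcpe r₂ hpr₂)


lemma two_split (k : ℕ) (a : ℤ) (h : ((2:ℤ)^k) ∣ a^2 - 1) :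
    (2:ℤ)^k ∣ a - 1 ∨ (2:ℤ)^k ∣ a + 1 ∨
    (3 ≤ k ∧ ((2:ℤ)^k ∣ a - 1 - 2^(k-1) ∨ (2:ℤ)^k ∣ a + 1 - 2^(k-1))) := by
  rcases Nat.lt_or_ge k 1 with hk | hk
  · interval_cases k; simp
  have h2 : (2:ℤ) ∣ a^2 - 1 := (dvd_pow_self (2:ℤ) (by omega : k ≠ 0)).trans h
  have ha : ¬ (2:ℤ) ∣ a := by
    rintro hd
    obtain ⟨x, hx⟩ : Even (a^2) := by
      rcases hd with ⟨b, rfl⟩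
      exact ⟨2*b*b, by ring⟩
    rw [hx] at h2
    omega
  have h4 : (4:ℤ) ∣ a - 1 ∨ (4:ℤ) ∣ a + 1 := by omega
  have hpow : (2:ℤ)^k = 2^(k-1)*2 := by
    rw [← pow_succ]
    congr 1
    omega
  rcases Nat.lt_or_ge k 3 with hk3 | hk3
  · interval_cases k
    · left; omega
    · rcases h4 with h4 | h4
      · left; exact_mod_cast h4
      · right; left; exact_mod_cast h4
  have hfac : (2:ℤ)^k ∣ (a-1)*(a+1) := by
    have h' : (a-1)*(a+1) = a^2 - 1 := by ring
    rw [h']; exact h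
  rcases h4 with h4 | h4
  · obtain ⟨u, hu⟩ : (2:ℤ) ∣ a + 1 := by omega
    have huodd : ¬ (2:ℤ) ∣ u := by omega
    have hd : (2:ℤ)^(k-1) ∣ (a-1) * u := by
      have h1 : (2:ℤ)^(k-1) * 2 ∣ ((a-1) * u) * 2 := by
        rw [← hpow]
        calc (2:ℤ)^k ∣ (a-1)*(a+1) := hfac
        _ = (a-1)*u*2 := by rw [hu]; ring
      exact (mul_dvd_mul_iff_right (by norm_num : (2:ℤ) ≠ 0)).mp h1
    have hcp : IsCoprime ((2:ℤ)^(k-1)) u :=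
      IsCoprime.pow_left ((Nat.prime_iff_prime_int.mp Nat.prime_two).coprime_iff_not_dvd.mpr huodd)
    have hd2 : (2:ℤ)^(k-1) ∣ a - 1 := hcp.dvd_of_dvd_mul_right hd
    obtain ⟨t, ht⟩ := hd2
    rcases Int.even_or_odd t with ⟨s, hs⟩ | ⟨s, hs⟩
    · left
      exact ⟨s, by rw [ht, hs, hpow]; ring⟩
    · right; right
      refine ⟨hk3, Or.inl ⟨s, ?_⟩⟩
      rw [ht, hs, hpow]; ring
  · obtain ⟨u, hu⟩ : (2:ℤ) ∣ a - 1 := by omega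
    have huodd : ¬ (2:ℤ) ∣ u := by omega
    have hd : (2:ℤ)^(k-1) ∣ (a+1) * u := by
      have h1 : (2:ℤ)^(k-1) * 2 ∣ ((a+1) * u) * 2 := by
        rw [← hpow]
        calc (2:ℤ)^k ∣ (a-1)*(a+1) := hfac
        _ = (a+1)*u*2 := by rw [hu]; ring
      exact (mul_dvd_mul_iff_right (by norm_num : (2:ℤ) ≠ 0)).mp h1
    have hcp : IsCoprime ((2:ℤ)^(k-1)) u :=
      IsCoprime.pow_left ((Nat.prime_iff_prime_int.mp Nat.prime_two).coprime_iff_not_dvd.mpr huodd)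
    have hd2 : (2:ℤ)^(k-1) ∣ a + 1 := hcp.dvd_of_dvd_mul_right hd
    obtain ⟨t, ht⟩ := hd2
    rcases Int.even_or_odd t with ⟨s, hs⟩ | ⟨s, hs⟩
    · right; left
      exact ⟨s, by rw [ht, hs, hpow]; ring⟩
    · right; right
      refine ⟨hk3, Or.inr ⟨s, ?_⟩⟩
      rw [ht, hs, hpow]; ring


lemma crt_eval (n N₁ N₂ : ℕ) (hN : Nat.Coprime N₁ N₂) (h : n = N₁ * N₂) (a b c : ℤ)
    (h1 : (N₁:ℤ) ∣ a - b) (h2 : (N₂:ℤ) ∣ a - c) :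
    (ZMod.chineseRemainder hN) (ZMod.castHom (dvd_of_eq h.symm) (ZMod (N₁ * N₂)) ((a : ZMod n)))
      = ((b : ZMod N₁), (c : ZMod N₂)) := by
  rw [map_intCast, map_intCast]
  have hb : ((a : ZMod N₁)) = (b : ZMod N₁) := by
    rw [← sub_eq_zero, ← Int.cast_sub, ZMod.intCast_zmod_eq_zero_iff_dvd]; exact h1
  have hc : ((a : ZMod N₂)) = (c : ZMod N₂) := by
    rw [← sub_eq_zero, ← Int.cast_sub, ZMod.intCast_zmod_eq_zero_iff_dvd]; exact h2
  ext
  · simpa using hb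
  · simpa using hc

theorem stmt_3 (n : ℕ) (hn : 0 < n) (m : (ZMod n)ˣ) (hm : m ^ 2 = 1) :
    ∃ (N₁ N₂ : ℕ) (hN : Nat.Coprime N₁ N₂) (h : n = N₁ * N₂),
      (ZMod.chineseRemainder hN)
          (ZMod.castHom (dvd_of_eq h.symm) (ZMod (N₁ * N₂)) (m : ZMod n)) = (1, -1) ∨
      (8 ∣ N₂ ∧ (ZMod.chineseRemainder hN)
          (ZMod.castHom (dvd_of_eq h.symm) (ZMod (N₁ * N₂)) (m : ZMod n)) =
            (1, -1 + ((N₂ / 2 : ℕ) : ZMod N₂))) ∨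
      (8 ∣ N₂ ∧ (ZMod.chineseRemainder hN)
          (ZMod.castHom (dvd_of_eq h.symm) (ZMod (N₁ * N₂)) (m : ZMod n)) =
            (-1, 1 + ((N₂ / 2 : ℕ) : ZMod N₂))) := by
  haveI : NeZero n := ⟨hn.ne'⟩
  set a : ℤ := ((m : ZMod n).val : ℤ) with ha
  have hma : ((a : ZMod n)) = (m : ZMod n) := by
    rw [ha]; push_cast; exact ZMod.natCast_zmod_val _
  have hdvd : (n:ℤ) ∣ a^2 - 1 := by
    rw [← ZMod.intCast_zmod_eq_zero_iff_dvd]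
    push_cast
    rw [hma, sub_eq_zero]
    have h' := congrArg (Units.val) hm
    push_cast at h'
    exact h'
  set k := n.factorization 2 with hk
  set q := n / 2^k with hqdef
  have hnq : n = 2^k * q := (Nat.ordProj_mul_ordCompl_eq_self n 2).symm
  have h2q : ¬ 2 ∣ q := Nat.not_dvd_ordCompl Nat.prime_two hn.ne'
  have hqodd : Odd q := Nat.odd_iff.mpr (by omega)
  have hq2k : (((2:ℕ)^k : ℕ):ℤ) ∣ (n:ℤ) := by exact_mod_cast Int.natCast_dvd_natCast.mpr ⟨q, hnq⟩
  have h2ka : ((2:ℤ))^k ∣ a^2 - 1 := by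
    refine dvd_trans ?_ hdvd
    push_cast at hq2k ⊢
    exact hq2k
  have hqa : (q:ℤ) ∣ a^2 - 1 := dvd_trans (Int.natCast_dvd_natCast.mpr ⟨2^k, by rw [hnq]; ring⟩) hdvd
  obtain ⟨q₁, q₂, hqq, hcop, hd1, hd2⟩ := odd_split q hqodd a hqa
  -- basic coprimality facts
  have h2q₁ : ¬ 2 ∣ q₁ := fun hd => h2q (hqq ▸ hd.mul_right q₂)
  have h2q₂ : ¬ 2 ∣ q₂ := fun hd => h2q (hqq ▸ hd.mul_left q₁)
  have hc1 : Nat.Coprime (2^k) q₁ :=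
    Nat.Coprime.pow_left k ((Nat.prime_two.coprime_iff_not_dvd).mpr h2q₁)
  have hc2 : Nat.Coprime (2^k) q₂ :=
    Nat.Coprime.pow_left k ((Nat.prime_two.coprime_iff_not_dvd).mpr h2q₂)
  have hic1 : IsCoprime ((2:ℤ)^k) (q₁:ℤ) := by
    have := Nat.isCoprime_iff_coprime.mpr hc1; push_cast at this; exact this
  have hic2 : IsCoprime ((2:ℤ)^k) (q₂:ℤ) := by
    have := Nat.isCoprime_iff_coprime.mpr hc2; push_cast at this; exact this
  rw [← hma]
  rcases two_split k a h2ka with hA | hB | ⟨hk3, hC | hD⟩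
  · -- m ≡ 1 mod 2^k : N₁ = 2^k q₁, N₂ = q₂, (1,-1)
    refine ⟨2^k * q₁, q₂, Nat.Coprime.mul hc2 hcop, by rw [hnq, hqq, mul_assoc], Or.inl ?_⟩
    have := crt_eval n (2^k*q₁) q₂ (Nat.Coprime.mul hc2 hcop) (by rw [hnq, hqq, mul_assoc]) a 1 (-1)
      (by push_cast; exact hic1.mul_dvd hA hd1) (by simpa using hd2)
    simpa using this
  · -- m ≡ -1 mod 2^k : N₁ = q₁, N₂ = 2^k q₂, (1,-1)
    refine ⟨q₁, 2^k * q₂, (Nat.Coprime.mul_right hc1.symm hcop), by rw [hnq, hqq]; ring, Or.inl ?_⟩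
    have := crt_eval n q₁ (2^k*q₂) (Nat.Coprime.mul_right hc1.symm hcop) (by rw [hnq, hqq]; ring) a 1 (-1)
      (hd1) (by push_cast; exact hic2.mul_dvd (by simpa using hB) (by simpa using hd2))
    simpa using this
  · -- m ≡ 1 + 2^(k-1) mod 2^k : N₁ = q₂, N₂ = 2^k q₁, case (-1, 1 + N₂/2)
    have h8 : 8 ∣ 2^k * q₁ := dvd_mul_of_dvd_left (by calc (8:ℕ) = 2^3 := by norm_num
                                                        _ ∣ 2^k := pow_dvd_pow 2 hk3) q₁
    have hhalf : (2^k * q₁) / 2 = 2^(k-1) * q₁ := by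
      have h' : 2^k * q₁ = 2 * (2^(k-1) * q₁) := by
        rw [← mul_assoc, ← pow_succ']; congr 2; omega
      rw [h', Nat.mul_div_cancel_left _ two_pos]
    refine ⟨q₂, 2^k * q₁, (Nat.Coprime.mul_right hc2.symm hcop.symm), by rw [hnq, hqq]; ring,
      Or.inr (Or.inr ⟨h8, ?_⟩)⟩
    have hcong : ((2:ℤ)^k * q₁) ∣ a - (1 + 2^(k-1) * q₁) := by
      refine IsCoprime.mul_dvd hic1 ?_ ?_
      · -- 2^k ∣ a - 1 - 2^(k-1) q₁ = (a - 1 - 2^(k-1)) - 2^(k-1)(q₁ - 1)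
        have hq₁e : ∃ s:ℤ, (q₁:ℤ) - 1 = 2*s := ⟨((q₁:ℤ)-1)/2, by omega⟩
        obtain ⟨s, hs⟩ := hq₁e
        have : a - (1 + 2^(k-1) * q₁) = (a - 1 - 2^(k-1)) - 2^(k-1)*((q₁:ℤ)-1) := by ring
        rw [this, hs]
        refine dvd_sub hC ⟨s, ?_⟩
        have h2k : (2:ℤ)^k = 2^(k-1)*2 := by rw [← pow_succ]; congr 1; omega
        rw [h2k]; ring
      · have : a - (1 + 2^(k-1) * q₁) = (a - 1) - 2^(k-1)*(q₁:ℤ) := by ring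
        rw [this]
        exact dvd_sub hd1 (dvd_mul_left _ _)
    have := crt_eval n q₂ (2^k*q₁) (Nat.Coprime.mul_right hc2.symm hcop.symm) (by rw [hnq, hqq]; ring)
      a (-1) (1 + 2^(k-1) * q₁) (by simpa using hd2) (by push_cast; exact hcong)
    rw [this, Prod.ext_iff]
    refine ⟨by push_cast; ring, ?_⟩
    rw [hhalf]
    push_cast
    ring
  · -- m ≡ -1 + 2^(k-1) mod 2^k : N₁ = q₁, N₂ = 2^k q₂, case (1, -1 + N₂/2)
    have h8 : 8 ∣ 2^k * q₂ := dvd_mul_of_dvd_left (by calc (8:ℕ) = 2^3 := by norm_num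
                                                        _ ∣ 2^k := pow_dvd_pow 2 hk3) q₂
    have hhalf : (2^k * q₂) / 2 = 2^(k-1) * q₂ := by
      have h' : 2^k * q₂ = 2 * (2^(k-1) * q₂) := by
        rw [← mul_assoc, ← pow_succ']; congr 2; omega
      rw [h', Nat.mul_div_cancel_left _ two_pos]
    refine ⟨q₁, 2^k * q₂, (Nat.Coprime.mul_right hc1.symm hcop), by rw [hnq, hqq]; ring,
      Or.inr (Or.inl ⟨h8, ?_⟩)⟩
    have hcong : ((2:ℤ)^k * q₂) ∣ a - (-1 + 2^(k-1) * q₂) := by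
      refine IsCoprime.mul_dvd hic2 ?_ ?_
      · have hq₂e : ∃ s:ℤ, (q₂:ℤ) - 1 = 2*s := ⟨((q₂:ℤ)-1)/2, by omega⟩
        obtain ⟨s, hs⟩ := hq₂e
        have : a - (-1 + 2^(k-1) * q₂) = (a + 1 - 2^(k-1)) - 2^(k-1)*((q₂:ℤ)-1) := by ring
        rw [this, hs]
        refine dvd_sub hD ⟨s, ?_⟩
        have h2k : (2:ℤ)^k = 2^(k-1)*2 := by rw [← pow_succ]; congr 1; omega
        rw [h2k]; ring
      · have : a - (-1 + 2^(k-1) * q₂) = (a + 1) - 2^(k-1)*(q₂:ℤ) := by ring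
        rw [this]
        exact dvd_sub hd2 (dvd_mul_left _ _)
    have := crt_eval n q₁ (2^k*q₂) (Nat.Coprime.mul_right hc1.symm hcop) (by rw [hnq, hqq]; ring)
      a 1 (-1 + 2^(k-1) * q₂) hd1 (by push_cast; exact hcong)
    rw [this, Prod.ext_iff]
    refine ⟨by push_cast; ring, ?_⟩
    rw [hhalf]
    push_cast
    ring
end

section
/- Let K be a field of characteristic zero containing all roots of unity, and suppose zⁿ - f and xᵐ - φ are irreducible over K with n, m coprime. Let L = K[z]/(zⁿ - f) and L' = K[x]/(xᵐ - φ). Then L ⊗_K L' is a field, and it is a Galois extension of K with cyclic Galois group of order nm. -/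
/-!
Field extensions of coprime degrees are linearly disjoint inside any common extension, so
`L ⊗[K] L'` is a field. Writing `α ^ n = f` and `β ^ m = φ`, a Bézout relation `u * n + v * m = 1` recovers `α ⊗ 1` and `1 ⊗ β` from `γ = α ⊗ β`, so
`K⟮γ⟯ = L ⊗[K] L'` with `γ ^ (n * m) ∈ K` (if `α` or `β` is zero, the other one serves as `γ`).
Kummer theory, with the `n * m`-th roots of unity in `K`, then makes the extension cyclic Galois.
-/
open Polynomial TensorProduct IntermediateField Module

theorem Algebra.TensorProduct.isField_of_finrank_coprime (K L L' : Type*) [Field K] [Field L]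
    [Field L'] [Algebra K L] [Algebra K L'] (h : (finrank K L).Coprime (finrank K L')) :
    IsField (L ⊗[K] L') :=
  LinearDisjoint.isField_of_forall K L L' fun _ _ _ fa fb => .of_finrank_coprime <| by
    rwa [(AlgEquiv.ofInjectiveField fa).toLinearEquiv.finrank_eq,
      (AlgEquiv.ofInjectiveField fb).toLinearEquiv.finrank_eq] at h

theorem Algebra.TensorProduct.adjoin_includeLeft_includeRight_eq_top {R A B : Type*}
    [CommSemiring R] [Semiring A] [Semiring B] [Algebra R A] [Algebra R B] {a : A} {b : B}
    (ha : Algebra.adjoin R {a} = ⊤) (hb : Algebra.adjoin R {b} = ⊤) :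
    Algebra.adjoin R {(includeLeft : A →ₐ[R] A ⊗[R] B) a, includeRight b} = ⊤ := by
  rw [Set.insert_eq, Algebra.adjoin_union, ← Set.image_singleton, ← Set.image_singleton,
    ← AlgHom.map_adjoin, ← AlgHom.map_adjoin, ha, hb, Algebra.map_top, Algebra.map_top]
  simpa only [AlgHom.comp_id, map_id, Algebra.range_id] using
    (map_range (AlgHom.id R A) (AlgHom.id R B)).symm

theorem AlgHom.pow_mem_range_algebraMap {R A B : Type*} [CommSemiring R] [Semiring A] [Semiring B]
    [Algebra R A] [Algebra R B] (φ : A →ₐ[R] B) {a : A} {n : ℕ}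
    (ha : a ^ n ∈ Set.range (algebraMap R A)) : φ a ^ n ∈ Set.range (algebraMap R B) := by
  obtain ⟨c, hc⟩ := ha
  exact ⟨c, by rw [← map_pow, ← hc, AlgHom.commutes]⟩

section Kummer

variable {K E : Type*} [Field K] [Field E] [Algebra K E]

theorem IntermediateField.mem_adjoin_simple_mul_of_pow_eq_algebraMap {x y : E} {a b : K}
    {n m : ℕ} (hnm : n.Coprime m) (hx : x ^ n = algebraMap K E a)
    (hy : y ^ m = algebraMap K E b) (hy0 : y ≠ 0) : x ∈ K⟮x * y⟯ := by
  obtain rfl | hx0 := eq_or_ne x 0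
  · exact zero_mem _
  obtain ⟨u, v, huv⟩ := Nat.isCoprime_iff_coprime.mpr hnm
  have hx_eq : x = algebraMap K E a ^ u * (x * y) ^ (v * m) / algebraMap K E b ^ v :=
    calc x = x ^ (u * n + v * m) := by rw [huv, zpow_one]
      _ = (x ^ n) ^ u * (x * y) ^ (v * m) / (y ^ m) ^ v := by
        rw [zpow_add₀ hx0, mul_zpow, mul_comm u, mul_comm v, zpow_mul, zpow_mul, zpow_mul,
          zpow_natCast, zpow_natCast, zpow_natCast]
        field_simp
      _ = _ := by rw [hx, hy]
  have hmem : algebraMap K E a ^ u * (x * y) ^ (v * m) / algebraMap K E b ^ v ∈ K⟮x * y⟯ :=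
    div_mem (mul_mem (zpow_mem (algebraMap_mem _ a) u) (zpow_mem (mem_adjoin_simple_self K _) _))
      (zpow_mem (algebraMap_mem _ b) v)
  rwa [← hx_eq] at hmem

theorem IntermediateField.exists_pow_mem_range_adjoin_simple_eq_adjoin_pair {x y : E} {n m : ℕ}
    (hnm : n.Coprime m) (hx : x ^ n ∈ Set.range (algebraMap K E))
    (hy : y ^ m ∈ Set.range (algebraMap K E)) :
    ∃ γ : E, γ ^ (n * m) ∈ Set.range (algebraMap K E) ∧ K⟮γ⟯ = K⟮x, y⟯ := by
  suffices ∃ γ : E, γ ^ (n * m) ∈ Set.range (algebraMap K E) ∧ γ ∈ K⟮x, y⟯ ∧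
      x ∈ K⟮γ⟯ ∧ y ∈ K⟮γ⟯ by
    obtain ⟨γ, hγ, hγxy, hxγ, hyγ⟩ := this
    refine ⟨γ, hγ, le_antisymm (adjoin_simple_le_iff.mpr hγxy) ?_⟩
    exact adjoin_le_iff.mpr (Set.insert_subset_iff.mpr ⟨hxγ, Set.singleton_subset_iff.mpr hyγ⟩)
  have hx_mem : x ∈ K⟮x, y⟯ := subset_adjoin K _ (Set.mem_insert x {y})
  have hy_mem : y ∈ K⟮x, y⟯ := subset_adjoin K _ (Set.mem_insert_of_mem x rfl)
  have hx_pow : x ^ (n * m) ∈ Set.range (algebraMap K E) :=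
    pow_mul x n m ▸ Algebra.mem_bot.mp (pow_mem (Algebra.mem_bot.mpr hx) m)
  have hy_pow : y ^ (n * m) ∈ Set.range (algebraMap K E) :=
    pow_mul' y n m ▸ Algebra.mem_bot.mp (pow_mem (Algebra.mem_bot.mpr hy) n)
  obtain rfl | hx0 := eq_or_ne x 0
  · exact ⟨y, hy_pow, hy_mem, zero_mem _, mem_adjoin_simple_self K y⟩
  obtain rfl | hy0 := eq_or_ne y 0
  · exact ⟨x, hx_pow, hx_mem, mem_adjoin_simple_self K x, zero_mem _⟩
  obtain ⟨a, ha⟩ := hx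
  obtain ⟨b, hb⟩ := hy
  refine ⟨x * y, ?_, mul_mem hx_mem hy_mem,
    mem_adjoin_simple_mul_of_pow_eq_algebraMap hnm ha.symm hb.symm hy0, ?_⟩
  · rw [mul_pow]
    exact Algebra.mem_bot.mp (mul_mem (Algebra.mem_bot.mpr hx_pow) (Algebra.mem_bot.mpr hy_pow))
  · rw [mul_comm x y]
    exact mem_adjoin_simple_mul_of_pow_eq_algebraMap hnm.symm hb.symm ha.symm hx0

theorem isGalois_isCyclic_of_adjoin_pair_eq_top {n m : ℕ} (hnm : n.Coprime m)
    (hrank : finrank K E = n * m) (hζ : (primitiveRoots (n * m) K).Nonempty) {x y : E}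
    (hx : x ^ n ∈ Set.range (algebraMap K E)) (hy : y ^ m ∈ Set.range (algebraMap K E))
    (hxy : K⟮x, y⟯ = ⊤) : IsGalois K E ∧ IsCyclic Gal(E/K) ∧ Nat.card Gal(E/K) = n * m := by
  have : FiniteDimensional K E := Module.finite_of_finrank_pos <| hrank ▸ Nat.pos_of_ne_zero
    fun h ↦ by simp [h] at hζ
  obtain ⟨γ, hγ, hγxy⟩ := exists_pow_mem_range_adjoin_simple_eq_adjoin_pair hnm hx hy
  rw [← hrank] at hγ hζ ⊢
  have kummer := (isCyclic_tfae K E hζ).out 0 2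
  obtain ⟨hGal, hcyc⟩ := kummer.mpr ⟨γ, hγ, hγxy.trans hxy⟩
  exact ⟨hGal, hcyc, IsGalois.card_aut_eq_finrank K E⟩

end Kummer

theorem finrank_adjoinRoot_X_pow_sub_C {K : Type*} [Field K] (n : ℕ) (a : K) :
    finrank K (AdjoinRoot (X ^ n - C a)) = n :=
  finrank_quotient_span_eq_natDegree.trans (natDegree_X_pow_sub_C)

theorem root_X_pow_sub_C_pow_mem_range {K : Type*} [Field K] (n : ℕ) (a : K) :
    AdjoinRoot.root (X ^ n - C a) ^ n ∈ Set.range (algebraMap K (AdjoinRoot (X ^ n - C a))) :=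
  ⟨a, (root_X_pow_sub_C_pow n a).symm⟩

open Polynomial TensorProduct in
theorem stmt_5_general (K : Type) [Field K]
    (hroot : ∀ k : ℕ, 0 < k → ∃ ζ : K, IsPrimitiveRoot ζ k)
    (n m : ℕ) (hn : 0 < n) (hm : 0 < m) (hnm : Nat.Coprime n m)
    (f φ : K) (hf : Irreducible (X ^ n - C f)) (hφ : Irreducible (X ^ m - C φ)) :
    ∃ hT : IsField (AdjoinRoot (X ^ n - C f) ⊗[K] AdjoinRoot (X ^ m - C φ)),
      letI := hT.toField
      IsGalois K (AdjoinRoot (X ^ n - C f) ⊗[K] AdjoinRoot (X ^ m - C φ)) ∧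
      IsCyclic ((AdjoinRoot (X ^ n - C f) ⊗[K] AdjoinRoot (X ^ m - C φ)) ≃ₐ[K]
        (AdjoinRoot (X ^ n - C f) ⊗[K] AdjoinRoot (X ^ m - C φ))) ∧
      Nat.card ((AdjoinRoot (X ^ n - C f) ⊗[K] AdjoinRoot (X ^ m - C φ)) ≃ₐ[K]
        (AdjoinRoot (X ^ n - C f) ⊗[K] AdjoinRoot (X ^ m - C φ))) = n * m := by
  have := Fact.mk hf
  have := Fact.mk hφ
  have hrank : finrank K (AdjoinRoot (X ^ n - C f) ⊗[K] AdjoinRoot (X ^ m - C φ)) = n * m := by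
    rw [finrank_tensorProduct, finrank_adjoinRoot_X_pow_sub_C, finrank_adjoinRoot_X_pow_sub_C]
  have hT := Algebra.TensorProduct.isField_of_finrank_coprime K (AdjoinRoot (X ^ n - C f))
    (AdjoinRoot (X ^ m - C φ)) (by
      rwa [finrank_adjoinRoot_X_pow_sub_C, finrank_adjoinRoot_X_pow_sub_C])
  let := hT.toField
  obtain ⟨ζ, hζ⟩ := hroot (n * m) (Nat.mul_pos hn hm)
  have hgen := Algebra.TensorProduct.adjoin_includeLeft_includeRight_eq_top (R := K)
    (AdjoinRoot.adjoinRoot_eq_top (f := X ^ n - C f))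
    (AdjoinRoot.adjoinRoot_eq_top (f := X ^ m - C φ))
  exact ⟨hT, isGalois_isCyclic_of_adjoin_pair_eq_top hnm hrank
    ⟨ζ, (mem_primitiveRoots (Nat.mul_pos hn hm)).mpr hζ⟩
    (Algebra.TensorProduct.includeLeft.pow_mem_range_algebraMap
      (root_X_pow_sub_C_pow_mem_range n f))
    (Algebra.TensorProduct.includeRight.pow_mem_range_algebraMap
      (root_X_pow_sub_C_pow_mem_range m φ))
    (adjoin_eq_top_of_algebra K _ hgen)⟩

open Polynomial TensorProduct in
theorem stmt_5 (K : Type) [Field K] [CharZero K]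
    (hroot : ∀ k : ℕ, 0 < k → ∃ ζ : K, IsPrimitiveRoot ζ k)
    (n m : ℕ) (hn : 0 < n) (hm : 0 < m) (hnm : Nat.Coprime n m)
    (f φ : K) (hf : Irreducible (X ^ n - C f)) (hφ : Irreducible (X ^ m - C φ)) :
    ∃ hT : IsField (AdjoinRoot (X ^ n - C f) ⊗[K] AdjoinRoot (X ^ m - C φ)),
      letI := hT.toField
      IsGalois K (AdjoinRoot (X ^ n - C f) ⊗[K] AdjoinRoot (X ^ m - C φ)) ∧
      IsCyclic ((AdjoinRoot (X ^ n - C f) ⊗[K] AdjoinRoot (X ^ m - C φ)) ≃ₐ[K]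
        (AdjoinRoot (X ^ n - C f) ⊗[K] AdjoinRoot (X ^ m - C φ))) ∧
      Nat.card ((AdjoinRoot (X ^ n - C f) ⊗[K] AdjoinRoot (X ^ m - C φ)) ≃ₐ[K]
        (AdjoinRoot (X ^ n - C f) ⊗[K] AdjoinRoot (X ^ m - C φ))) = n * m :=
  stmt_5_general K hroot n m hn hm hnm f φ hf hφ
end
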